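/- Let g : ℝⁿ → ℝ be defined by g(x) = max_{i∈[n]} |π(x_i) − c_i| + Σ_{i=1}^n |π(x_i) − x_i|, where c ∈ {0,1}ⁿ and π : ℝ → [0,1] is the clamp function π(t) = min(max(t,0),1). Then g is convex on ℝⁿ. -/

import Mathlib

/-!
Write `π` for the clamp onto `[0, 1]`. The penalty `|π t - t| = max (-t) 0 (t - 1)` is convex.
Since `c i` is an endpoint of `[0, 1]`, `π (x i)` lies between `x i` and `c i`, so
`|π (x i) - c i| + |π (x i) - x i| = |x i - c i|`. Pulling the penalty sum inside the maximum
and absorbing its `i`-th term into the `i`-th entry exhibits the objective as the maximum over `i`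
of the convex functions `|x i - c i| + ∑ j ≠ i, |π (x j) - x j|`.
-/

open Set Finset

section Clamp

variable {a b : ℝ}

theorem abs_clamp_sub_self (hab : a ≤ b) (t : ℝ) :
    |min (max t a) b - t| = max (max (a - t) 0) (t - b) := by
  grind

theorem convexOn_abs_clamp_sub_self (hab : a ≤ b) :
    ConvexOn ℝ univ fun t : ℝ => |min (max t a) b - t| := by
  simp only [abs_clamp_sub_self hab]
  exact (((convexOn_const a convex_univ).sub (concaveOn_id convex_univ)).sup
    (convexOn_const 0 convex_univ)).sup
    ((convexOn_id convex_univ).sub (concaveOn_const b convex_univ))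

theorem clamp_mem_segment_of_endpoint (hab : a ≤ b) (t : ℝ) {c : ℝ} (hc : c = a ∨ c = b) :
    min (max t a) b ∈ segment ℝ t c := by
  rw [segment_eq_uIcc, Set.mem_uIcc]
  grind

theorem abs_clamp_sub_add_abs_clamp_sub_self (hab : a ≤ b) (t : ℝ) {c : ℝ}
    (hc : c = a ∨ c = b) :
    |min (max t a) b - c| + |min (max t a) b - t| = |t - c| := by
  have hdist := dist_add_dist_of_mem_segment (clamp_mem_segment_of_endpoint hab t hc)
  rw [Real.dist_eq, Real.dist_eq, Real.dist_eq, abs_sub_comm t] at hdist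
  linarith

end Clamp

section Convex

variable {𝕜 E β ι : Type*} [Semiring 𝕜] [PartialOrder 𝕜] [AddCommMonoid E]

theorem ConvexOn.comp_eval [SMul 𝕜 E] [AddCommMonoid β] [PartialOrder β] [SMul 𝕜 β]
    {f : E → β} (hf : ConvexOn 𝕜 univ f) (i : ι) :
    ConvexOn 𝕜 univ fun x : ι → E => f (x i) :=
  ⟨convex_univ, fun _ _ _ _ _ _ hp hq hpq => hf.2 (mem_univ _) (mem_univ _) hp hq hpq⟩

theorem ConvexOn.sum [SMul 𝕜 E] [AddCommMonoid β] [PartialOrder β] [IsOrderedAddMonoid β]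
    [Module 𝕜 β] {s : Set E} (hs : Convex 𝕜 s) {t : Finset ι} {f : ι → E → β}
    (hf : ∀ i ∈ t, ConvexOn 𝕜 s (f i)) : ConvexOn 𝕜 s fun x => ∑ i ∈ t, f i x := by
  classical
  induction t using Finset.induction_on with
  | empty => simpa using convexOn_const 0 hs
  | insert j t hj ih =>
    simp only [sum_insert hj]
    exact (hf j (mem_insert_self j t)).add (ih fun i hi => hf i (mem_insert_of_mem hi))

theorem ConvexOn.ciSup [Module ℝ E] [Finite ι] [Nonempty ι] {s : Set E} {f : ι → E → ℝ}
    (hf : ∀ i, ConvexOn ℝ s (f i)) : ConvexOn ℝ s fun x => ⨆ i, f i x := by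
  refine ⟨(hf (Classical.arbitrary ι)).1, fun x hx y hy p q hp hq hpq => ciSup_le fun i => ?_⟩
  have hbdd (z : E) : f i z ≤ ⨆ j, f j z :=
    le_ciSup (f := fun j => f j z) (Finite.bddAbove_range _) i
  calc f i (p • x + q • y) ≤ p * f i x + q * f i y := (hf i).2 hx hy hp hq hpq
    _ ≤ p * (⨆ j, f j x) + q * ⨆ j, f j y := by gcongr <;> exact hbdd _

end Convex

theorem ciSup_add_sum_eq_ciSup_add_sum_erase {ι : Type*} [Fintype ι] [DecidableEq ι]
    [Nonempty ι] {u v w : ι → ℝ} (h : ∀ i, u i + v i = w i) :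
    (⨆ i, u i) + ∑ i, v i = ⨆ i, (w i + ∑ j ∈ univ.erase i, v j) := by
  rw [ciSup_add (Finite.bddAbove_range u)]
  congr 1 with i
  rw [← add_sum_erase _ _ (mem_univ i), ← add_assoc, h]

/-- The max-norm objective function (with projection penalty) is convex. -/
theorem maxNorm_objective_convex (n : ℕ) (c : Fin n → ℝ)
    (hc : ∀ i, c i = 0 ∨ c i = 1) :
    ConvexOn ℝ Set.univ (fun x : Fin n → ℝ =>
      (⨆ i, |min (max (x i) 0) 1 - c i|) + ∑ i, |min (max (x i) 0) 1 - x i|) := by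
  rcases isEmpty_or_nonempty (Fin n) with _ | _
  · simpa using convexOn_const (0 : ℝ) convex_univ
  have hterm (i : Fin n) : ConvexOn ℝ univ fun x : Fin n → ℝ =>
      |x i - c i| + ∑ j ∈ univ.erase i, |min (max (x j) 0) 1 - x j| :=
    ((convexOn_univ_dist (c i)).comp_eval i).add <| ConvexOn.sum convex_univ fun j _ =>
      (convexOn_abs_clamp_sub_self zero_le_one).comp_eval j
  refine (ConvexOn.ciSup hterm).congr fun x _ => ?_
  exact (ciSup_add_sum_eq_ciSup_add_sum_erase fun i =>
    abs_clamp_sub_add_abs_clamp_sub_self zero_le_one (x i) (hc i)).symm
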